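/- Let G be a finite simple graph and a, b two nonadjacent vertices of G with S_{a,b} ≠ ∅ and k_min((a,b)) ≤ |S_{a,b}| + 1. Then every edge e' of G whose truss number changes after inserting (a,b) (i.e., φ_{G+(a,b)}(e') ≠ φ_G(e')) satisfies k_min((a,b)) ≤ φ_G(e') ≤ min(|S_{a,b}| + 1, k_max((a,b))). -/

import Mathlib

open SimpleGraph

variable {V : Type*}

/-- `H` is a `k`-truss of `G`: a connected subgraph with at least one edge in which
every edge lies in at least `k - 2` triangles of `H` (i.e. the endpoints of every edge
have at least `k - 2` common neighbors in `H`). -/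
def IsTruss (G : SimpleGraph V) (k : ℕ) (H : G.Subgraph) : Prop :=
  H.Connected ∧ H.edgeSet.Nonempty ∧
    ∀ a b : V, H.Adj a b → k - 2 ≤ {c : V | H.Adj a c ∧ H.Adj b c}.ncard

/-- The truss number `φ_G(e)` of an edge `e`: the largest `k` such that `e` lies in some
`k`-truss of `G`. -/
noncomputable def trussNumber (G : SimpleGraph V) (e : Sym2 V) : ℕ :=
  sSup {k : ℕ | ∃ H : G.Subgraph, IsTruss G k H ∧ e ∈ H.edgeSet}

/-- The support of the edge `(a, b)` in a subgraph `H`: the number of triangles of `H`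
containing it, i.e. the number of common neighbors of `a` and `b` in `H`. -/
noncomputable def suppIn {G : SimpleGraph V} (H : G.Subgraph) (a b : V) : ℕ :=
  {c : V | H.Adj a c ∧ H.Adj b c}.ncard

/-- The support of the edge `(a, b)` in `G`. -/
noncomputable def suppG (G : SimpleGraph V) (a b : V) : ℕ :=
  {c : V | G.Adj a c ∧ G.Adj b c}.ncard

/-- `S_{a,b}`: the common neighbors of `a` and `b` in `G`. -/
def commonNbrs (G : SimpleGraph V) (a b : V) : Set V :=
  {c : V | G.Adj a c ∧ G.Adj b c}

/-- `E_{S_{a,b} ↔ {a,b}}`: the edges of `G` joining a common neighbor of `a` and `b`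
to `a` or to `b`. -/
def sideEdges (G : SimpleGraph V) (a b : V) : Set (Sym2 V) :=
  {e | ∃ c, G.Adj a c ∧ G.Adj b c ∧ (e = s(a, c) ∨ e = s(b, c))}

/-- `k_min((a,b))`: minimum truss number among the edges of `E_{S_{a,b} ↔ {a,b}}`. -/
noncomputable def kmin (G : SimpleGraph V) (a b : V) : ℕ :=
  sInf (trussNumber G '' sideEdges G a b)

/-- `k_max((a,b))`: maximum truss number among the edges of `E_{S_{a,b} ↔ {a,b}}`. -/
noncomputable def kmax (G : SimpleGraph V) (a b : V) : ℕ :=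
  sSup (trussNumber G '' sideEdges G a b)

/-- `G + (a,b)`: the graph obtained from `G` by inserting the edge `(a, b)`. -/
def insertEdge (G : SimpleGraph V) (a b : V) : SimpleGraph V :=
  G ⊔ fromEdgeSet {s(a, b)}

/-!
Let `k = φ_{G+(a,b)}(e') > φ_G(e')` and let `H` be a `k`-truss of `G + (a,b)` through `e'`.
`H` must use the new edge `(a,b)`, so `a` and `b` have `k - 2 ≥ 1` common neighbours in `H`, all
of them in `S_{a,b}`. Removing `(a,b)` from `H` costs every other edge at most one triangle and
keeps `H` connected through a common neighbour `c`; this gives a `(k-1)`-truss of `G` through `e'`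
and `(a,c)`, whence `φ_G(e') = k - 1 ≤ |S_{a,b}| + 1` and `φ_G(e') ≤ φ_G(a,c) ≤ k_max`.
The edges that lose a triangle all lie in `E_{S_{a,b} ↔ {a,b}}`. If `k_min ≥ k`, each of those
lies in a `k`-truss of `G`, and adding all these trusses to `H - (a,b)` yields a `k`-truss of `G`
through `e'`, which is impossible.
-/

namespace SimpleGraph

namespace Subgraph

variable {G G' : SimpleGraph V} {H : G.Subgraph}

def transfer (H : G'.Subgraph) (hG : ∀ ⦃v w⦄, H.Adj v w → G.Adj v w) : G.Subgraph where
  verts := H.verts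
  Adj := H.Adj
  adj_sub h := hG h
  edge_vert := H.edge_vert
  symm := H.symm

lemma Connected.deleteEdges_of_adj (hH : H.Connected) {u v c : V} (huc : H.Adj u c)
    (hvc : H.Adj v c) : (H.deleteEdges {s(u, v)}).Connected := by
  set K := H.deleteEdges {s(u, v)}
  have hK : ∀ {x y : V}, H.Adj x y → s(x, y) ≠ s(u, v) → K.Adj x y := fun hxy hne =>
    (deleteEdges_adj _ _ _).2 ⟨hxy, hne⟩
  have hcu : K.Adj c u := hK huc.symm fun h => by grind [Sym2.eq_iff, huc.ne, hvc.ne]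
  have hcv : K.Adj c v := hK hvc.symm fun h => by grind [Sym2.eq_iff, huc.ne, hvc.ne]
  -- a deleted step `u - v` of a walk is replaced by `u - c - v`
  let f : H.verts → K.verts := fun p => ⟨p, p.2⟩
  suffices ∀ p q : H.verts, H.coe.Adj p q → K.coe.Reachable (f p) (f q) by
    refine Subgraph.connected_iff.2 ⟨Subgraph.preconnected_iff.2 fun x y => ?_, hH.nonempty⟩
    have hxy := hH.coe.preconnected ⟨x, x.2⟩ ⟨y, y.2⟩
    rw [reachable_iff_reflTransGen] at hxy ⊢
    exact Relation.ReflTransGen.lift' f (fun p q hpq => (reachable_iff_reflTransGen _ _).1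
      (this p q hpq)) _ _ hxy
  intro p q hpq
  by_cases hpq' : s(p.1, q.1) = s(u, v)
  · have hc : c ∈ K.verts := hcu.fst_mem
    have hpc : ∀ r : H.verts, r.1 = u ∨ r.1 = v → K.coe.Reachable (f r) ⟨c, hc⟩ := by
      rintro r (hr | hr)
      · exact (Adj.reachable (show K.coe.Adj ⟨c, hc⟩ (f r) by simpa [f, hr] using hcu)).symm
      · exact (Adj.reachable (show K.coe.Adj ⟨c, hc⟩ (f r) by simpa [f, hr] using hcv)).symm
    have := Sym2.eq_iff.1 hpq'
    exact (hpc p (by tauto)).trans (hpc q (by tauto)).symm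
  · exact Adj.reachable (hK hpq hpq')

lemma Connected.sup_iSup {ι : Sort*} {K : G.Subgraph} {T : ι → G.Subgraph} (hK : K.Connected)
    (hT : ∀ i, (T i).Connected) (hmeet : ∀ i, ((T i).verts ∩ K.verts).Nonempty) :
    (K ⊔ ⨆ i, T i).Connected := by
  set U := K ⊔ ⨆ i, T i
  obtain ⟨v₀, hv₀⟩ := hK.nonempty
  have hKU : K ≤ U := le_sup_left
  have reach : ∀ {L : G.Subgraph} (hL : L.Connected) (hLU : L ≤ U) (hv₀L : v₀ ∈ L.verts)
      {v : V} (hv : v ∈ L.verts), U.coe.Reachable ⟨v, hLU.1 hv⟩ ⟨v₀, hKU.1 hv₀⟩ :=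
    fun hL hLU hv₀L _ hv =>
      (hL.coe.preconnected ⟨_, hv⟩ ⟨v₀, hv₀L⟩).map (inclusion hLU)
  refine Subgraph.connected_iff.2 ⟨Subgraph.preconnected_iff.2 fun ⟨x, hx⟩ ⟨y, hy⟩ => ?_,
    ⟨v₀, hKU.1 hv₀⟩⟩
  suffices ∀ v (hv : v ∈ U.verts), U.coe.Reachable ⟨v, hv⟩ ⟨v₀, hKU.1 hv₀⟩ from
    (this x hx).trans (this y hy).symm
  intro v hv
  simp only [U, verts_sup, verts_iSup, Set.mem_union, Set.mem_iUnion] at hv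
  rcases hv with hv | ⟨i, hv⟩
  · exact reach hK hKU hv₀ hv
  · have hKT : (K ⊔ T i).Connected := (connected_sup hK.preconnected (hT i).preconnected
      (by simpa [Set.inter_comm] using hmeet i))
    exact reach hKT (sup_le hKU ((le_iSup T i).trans le_sup_right)) (Or.inl hv₀) (Or.inr hv)

lemma suppIn_le_suppIn_deleteEdges_add_one [Finite V] (H : G.Subgraph) (a b x y : V) :
    suppIn H x y ≤ suppIn (H.deleteEdges {s(a, b)}) x y + 1 := by
  classical
  -- only the triangle on `s(a, b)` can be lost; its third vertex is `b` if `a ∈ {x, y}`, else `a`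
  have hsub : {c | H.Adj x c ∧ H.Adj y c} ⊆ insert (if x = a ∨ y = a then b else a)
      {c | (H.deleteEdges {s(a, b)}).Adj x c ∧ (H.deleteEdges {s(a, b)}).Adj y c} := by
    rintro d ⟨hxd, hyd⟩
    have := hxd.ne
    have := hyd.ne
    simp only [Set.mem_insert_iff, Set.mem_ofPred_eq, deleteEdges_adj, Set.mem_singleton_iff,
      Sym2.eq_iff]
    split_ifs <;> grind
  exact (Set.ncard_le_ncard hsub (Set.toFinite _)).trans (Set.ncard_insert_le _ _)

lemma exists_of_suppIn_deleteEdges_lt [Finite V] {a b x y : V} (hxy : H.Adj x y)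
    (hlt : suppIn (H.deleteEdges {s(a, b)}) x y < suppIn H x y) :
    ∃ c, H.Adj a c ∧ H.Adj b c ∧ (s(x, y) = s(a, c) ∨ s(x, y) = s(b, c)) := by
  by_contra! hside
  refine hlt.not_ge (Set.ncard_le_ncard ?_ (Set.toFinite _))
  rintro d ⟨hxd, hyd⟩
  refine ⟨(deleteEdges_adj _ _ _).2 ⟨hxd, ?_⟩, (deleteEdges_adj _ _ _).2 ⟨hyd, ?_⟩⟩ <;>
    rintro hd <;> rw [Set.mem_singleton_iff, Sym2.eq_iff] at hd <;>
    rcases hd with ⟨rfl, rfl⟩ | ⟨rfl, rfl⟩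
  · exact (hside y hxy hyd.symm).1 rfl
  · exact (hside y hyd.symm hxy).2 rfl
  · exact (hside x hxy.symm hxd.symm).1 Sym2.eq_swap
  · exact (hside x hxd.symm hxy.symm).2 Sym2.eq_swap

end Subgraph

section Truss

variable {G G' : SimpleGraph V} {k m : ℕ} {H K : G.Subgraph} {e : Sym2 V}

lemma suppIn_mono [Finite V] (hHK : H ≤ K) (a b : V) : suppIn H a b ≤ suppIn K a b :=
  Set.ncard_le_ncard (fun _ hc => ⟨hHK.2 hc.1, hHK.2 hc.2⟩) (Set.toFinite _)

lemma IsTruss.mono (hH : IsTruss G m H) (hkm : k ≤ m) : IsTruss G k H :=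
  ⟨hH.1, hH.2.1, fun a b hab => (Nat.sub_le_sub_right hkm 2).trans (hH.2.2 a b hab)⟩

lemma IsTruss.le_card_add_two [Finite V] (hH : IsTruss G k H) : k ≤ Nat.card V + 2 := by
  obtain ⟨f, hf⟩ := hH.2.1
  induction f using Sym2.ind with
  | _ x y =>
    have := (hH.2.2 x y hf).trans (Set.ncard_le_card _)
    omega

lemma exists_isTruss_two (he : e ∈ G.edgeSet) :
    ∃ H : G.Subgraph, IsTruss G 2 H ∧ e ∈ H.edgeSet := by
  induction e using Sym2.ind with
  | _ x y =>
    rw [mem_edgeSet] at he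
    exact ⟨G.subgraphOfAdj he, ⟨Subgraph.subgraphOfAdj_connected he, ⟨s(x, y), by simp⟩,
      fun _ _ _ => by simp⟩, by simp⟩

lemma bddAbove_trussLevels [Finite V] (G : SimpleGraph V) (e : Sym2 V) :
    BddAbove {k : ℕ | ∃ H : G.Subgraph, IsTruss G k H ∧ e ∈ H.edgeSet} :=
  ⟨Nat.card V + 2, fun _ ⟨_, hH, _⟩ => hH.le_card_add_two⟩

lemma trussNumber_le_card_add_two [Finite V] (G : SimpleGraph V) (e : Sym2 V) :
    trussNumber G e ≤ Nat.card V + 2 :=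
  csSup_le' fun _ ⟨_, hH, _⟩ => hH.le_card_add_two

lemma IsTruss.le_trussNumber [Finite V] (hH : IsTruss G k H) (he : e ∈ H.edgeSet) :
    k ≤ trussNumber G e :=
  le_csSup (bddAbove_trussLevels G e) ⟨H, hH, he⟩

lemma two_le_trussNumber [Finite V] (he : e ∈ G.edgeSet) : 2 ≤ trussNumber G e :=
  let ⟨_, hH, heH⟩ := exists_isTruss_two he
  hH.le_trussNumber heH

lemma exists_isTruss_of_le_trussNumber [Finite V] (he : e ∈ G.edgeSet)
    (hk : k ≤ trussNumber G e) : ∃ H : G.Subgraph, IsTruss G k H ∧ e ∈ H.edgeSet :=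
  let ⟨H, hH, heH⟩ := Nat.sSup_mem ⟨2, exists_isTruss_two he⟩ (bddAbove_trussLevels G e)
  ⟨H, hH.mono hk, heH⟩

lemma IsTruss.exists_adj_adj {a b : V} (hH : IsTruss G k H) (hab : H.Adj a b) (hk : 3 ≤ k) :
    ∃ c, H.Adj a c ∧ H.Adj b c :=
  have := hH.2.2 a b hab
  Set.nonempty_of_ncard_ne_zero (s := {c | H.Adj a c ∧ H.Adj b c}) (by omega)

lemma IsTruss.transfer {H : G'.Subgraph} (hH : IsTruss G' k H)
    (hG : ∀ ⦃v w⦄, H.Adj v w → G.Adj v w) : IsTruss G k (H.transfer hG) :=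
  ⟨⟨hH.1.coe⟩, hH.2.1, hH.2.2⟩

lemma trussNumber_mono [Finite V] (hle : G ≤ G') (he : e ∈ G.edgeSet) :
    trussNumber G e ≤ trussNumber G' e := by
  obtain ⟨H, hH, heH⟩ := exists_isTruss_of_le_trussNumber he le_rfl
  exact (hH.transfer fun _ _ h => hle (H.adj_sub h)).le_trussNumber heH

end Truss

section InsertEdge

variable {G : SimpleGraph V} {a b : V}

lemma sideEdges_subset_edgeSet : sideEdges G a b ⊆ G.edgeSet := by
  rintro _ ⟨c, hac, hbc, rfl | rfl⟩
  exacts [hac, hbc]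

lemma kmin_le_trussNumber {e : Sym2 V} (he : e ∈ sideEdges G a b) :
    kmin G a b ≤ trussNumber G e :=
  Nat.sInf_le ⟨e, he, rfl⟩

lemma trussNumber_le_kmax [Finite V] {e : Sym2 V} (he : e ∈ sideEdges G a b) :
    trussNumber G e ≤ kmax G a b :=
  le_csSup ⟨Nat.card V + 2, by rintro _ ⟨e, -, rfl⟩; exact trussNumber_le_card_add_two G e⟩
    ⟨e, he, rfl⟩

lemma Adj.of_insertEdge {x y : V} (h : (insertEdge G a b).Adj x y) (hne : s(x, y) ≠ s(a, b)) :
    G.Adj x y := by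
  simp only [insertEdge, sup_adj, fromEdgeSet_adj, Set.mem_singleton_iff] at h
  tauto

lemma mem_commonNbrs_of_adj {H : (insertEdge G a b).Subgraph} {c : V} (hac : H.Adj a c)
    (hbc : H.Adj b c) : c ∈ commonNbrs G a b := by
  have := hac.ne
  have := hbc.ne
  exact ⟨(H.adj_sub hac).of_insertEdge (by grind [Sym2.eq_iff]),
    (H.adj_sub hbc).of_insertEdge (by grind [Sym2.eq_iff])⟩

lemma suppIn_le_ncard_commonNbrs [Finite V] (H : (insertEdge G a b).Subgraph) :
    suppIn H a b ≤ (commonNbrs G a b).ncard :=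
  Set.ncard_le_ncard (fun _ hc => mem_commonNbrs_of_adj hc.1 hc.2) (Set.toFinite _)

def eraseInserted (H : (insertEdge G a b).Subgraph) : G.Subgraph :=
  (H.deleteEdges {s(a, b)}).transfer fun _ _ h =>
    (H.adj_sub ((Subgraph.deleteEdges_adj _ _ _).1 h).1).of_insertEdge
      ((Subgraph.deleteEdges_adj _ _ _).1 h).2

lemma eraseInserted_adj {H : (insertEdge G a b).Subgraph} {x y : V} :
    (eraseInserted H).Adj x y ↔ H.Adj x y ∧ s(x, y) ≠ s(a, b) :=
  Subgraph.deleteEdges_adj _ _ _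

lemma mem_edgeSet_eraseInserted (hnadj : ¬ G.Adj a b) {H : (insertEdge G a b).Subgraph}
    {e : Sym2 V} (heH : e ∈ H.edgeSet) (heG : e ∈ G.edgeSet) :
    e ∈ (eraseInserted H).edgeSet := by
  induction e using Sym2.ind with
  | _ x y =>
    refine eraseInserted_adj.2 ⟨heH, fun h => hnadj ?_⟩
    rwa [← mem_edgeSet, ← h]

variable {k : ℕ} {H : (insertEdge G a b).Subgraph}

lemma IsTruss.adj_of_trussNumber_lt [Finite V] (hH : IsTruss (insertEdge G a b) k H)
    {e : Sym2 V} (he : e ∈ H.edgeSet) (hlt : trussNumber G e < k) : H.Adj a b := by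
  by_contra hab
  have hG : ∀ ⦃x y⦄, H.Adj x y → G.Adj x y := fun x y hxy => (H.adj_sub hxy).of_insertEdge
    fun h => hab <| by
      rcases Sym2.eq_iff.1 h with ⟨rfl, rfl⟩ | ⟨rfl, rfl⟩ <;> simpa [H.adj_comm]
  exact hlt.not_ge ((hH.transfer hG).le_trussNumber he)

lemma isTruss_pred_eraseInserted [Finite V] (hH : IsTruss (insertEdge G a b) k H)
    (hab : H.Adj a b) (hk : 3 ≤ k) : IsTruss G (k - 1) (eraseInserted H) := by
  obtain ⟨c, hac, hbc⟩ := hH.exists_adj_adj hab hk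
  refine ⟨⟨(hH.1.deleteEdges_of_adj hac hbc).coe⟩,
    ⟨s(a, c), eraseInserted_adj.2 ⟨hac, ?_⟩⟩, fun x y hxy => ?_⟩
  · have := hbc.ne
    grind [Sym2.eq_iff]
  · have : k - 2 ≤ suppIn H x y := hH.2.2 x y (eraseInserted_adj.1 hxy).1
    have := H.suppIn_le_suppIn_deleteEdges_add_one a b x y
    change _ ≤ suppIn (H.deleteEdges {s(a, b)}) x y
    omega

lemma IsTruss.exists_isTruss_eraseInserted_le [Finite V] (hH : IsTruss (insertEdge G a b) k H)
    (hab : H.Adj a b) (hk : 3 ≤ k) (hside : ∀ e ∈ sideEdges G a b, k ≤ trussNumber G e) :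
    ∃ K : G.Subgraph, IsTruss G k K ∧ eraseInserted H ≤ K := by
  have hK := isTruss_pred_eraseInserted hH hab hk
  choose T hT heT using fun e : sideEdges G a b =>
    exists_isTruss_of_le_trussNumber (sideEdges_subset_edgeSet e.2) (hside e e.2)
  set U := eraseInserted H ⊔ ⨆ e, T e
  have hKU : eraseInserted H ≤ U := le_sup_left
  have hTU : ∀ e, T e ≤ U := fun e => (le_iSup T e).trans le_sup_right
  have hmeet : ∀ e, ((T e).verts ∩ (eraseInserted H).verts).Nonempty := by
    rintro ⟨e, he⟩
    obtain ⟨c, -, -, rfl | rfl⟩ := id he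
    · exact ⟨a, (heT ⟨_, he⟩ : (T _).Adj a c).fst_mem, hab.fst_mem⟩
    · exact ⟨b, (heT ⟨_, he⟩ : (T _).Adj b c).fst_mem, hab.snd_mem⟩
  have hTsupp : ∀ e {x y}, (T e).Adj x y → k - 2 ≤ suppIn U x y := fun e _ _ hxy =>
    ((hT e).2.2 _ _ hxy).trans (suppIn_mono (hTU e) _ _)
  refine ⟨U, ⟨hK.1.sup_iSup (fun e => (hT e).1) hmeet, hK.2.1.mono (Subgraph.edgeSet_mono hKU),
    fun x y hxy => ?_⟩, hKU⟩
  rcases Subgraph.sup_adj.1 hxy with hxy | hxy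
  · by_cases hs : s(x, y) ∈ sideEdges G a b
    · exact hTsupp ⟨_, hs⟩ (heT ⟨_, hs⟩)
    have hsupp : suppIn H x y ≤ suppIn (eraseInserted H) x y := by
      refine not_lt.1 fun hlt => hs ?_
      obtain ⟨c, hac, hbc, he⟩ := Subgraph.exists_of_suppIn_deleteEdges_lt
        (eraseInserted_adj.1 hxy).1 hlt
      obtain ⟨hac', hbc'⟩ := mem_commonNbrs_of_adj hac hbc
      exact ⟨c, hac', hbc', he⟩
    exact (hH.2.2 x y (eraseInserted_adj.1 hxy).1).trans (hsupp.trans (suppIn_mono hKU _ _))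
  · obtain ⟨e, he⟩ := Subgraph.iSup_adj.1 hxy
    exact hTsupp e he

end InsertEdge

end SimpleGraph

theorem stmt13_general [Fintype V] (G : SimpleGraph V) (a b : V)
    (hnadj : ¬ G.Adj a b) :
    ∀ e' ∈ G.edgeSet, trussNumber (insertEdge G a b) e' ≠ trussNumber G e' →
      kmin G a b ≤ trussNumber G e' ∧
      trussNumber G e' ≤ min ((commonNbrs G a b).ncard + 1) (kmax G a b) := by
  intro e he hne
  set k := trussNumber (insertEdge G a b) e
  have hlt : trussNumber G e < k := (trussNumber_mono le_sup_left he).lt_of_ne' hne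
  obtain ⟨H, hH, heH⟩ := exists_isTruss_of_le_trussNumber (edgeSet_mono le_sup_left he) le_rfl
  have hab := hH.adj_of_trussNumber_lt heH hlt
  have hk : 3 ≤ k := (two_le_trussNumber he).trans_lt hlt
  have hK := isTruss_pred_eraseInserted hH hab hk
  have hpred : k - 1 ≤ trussNumber G e :=
    hK.le_trussNumber (mem_edgeSet_eraseInserted hnadj heH he)
  obtain ⟨c, hac, hbc⟩ := hH.exists_adj_adj hab hk
  have hc := mem_commonNbrs_of_adj hac hbc
  have hside : s(a, c) ∈ sideEdges G a b := ⟨c, hc.1, hc.2, Or.inl rfl⟩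
  have hkmax : k - 1 ≤ kmax G a b :=
    (hK.le_trussNumber (mem_edgeSet_eraseInserted hnadj hac hc.1)).trans
      (trussNumber_le_kmax hside)
  have hS : k - 2 ≤ (commonNbrs G a b).ncard :=
    (hH.2.2 a b hab).trans (suppIn_le_ncard_commonNbrs H)
  refine ⟨?_, le_min (by omega) (by omega)⟩
  by_contra! hmin
  have hkmin : ∀ e' ∈ sideEdges G a b, k ≤ trussNumber G e' := fun e' he' => by
    have := kmin_le_trussNumber he'
    omega
  obtain ⟨K, hKk, hKle⟩ := hH.exists_isTruss_eraseInserted_le hab hk hkmin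
  exact hlt.not_ge (hKk.le_trussNumber (Subgraph.edgeSet_mono hKle
    (mem_edgeSet_eraseInserted hnadj heH he)))

theorem stmt13 [Fintype V] (G : SimpleGraph V) (a b : V) (hab : a ≠ b)
    (hnadj : ¬ G.Adj a b) (hS : (commonNbrs G a b).Nonempty)
    (hk : kmin G a b ≤ (commonNbrs G a b).ncard + 1) :
    ∀ e' ∈ G.edgeSet, trussNumber (insertEdge G a b) e' ≠ trussNumber G e' →
      kmin G a b ≤ trussNumber G e' ∧
      trussNumber G e' ≤ min ((commonNbrs G a b).ncard + 1) (kmax G a b) :=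
  stmt13_general G a b hnadj
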